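/- Let G be a directed graph on vertices {1,...,N} with adjacency matrix A. For every vertex i and every k ≥ 1, the number of simple cycles of length k starting and ending at i equals ∑_{S ⊆ V, S ≠ ∅} C(N−|S|, k−|S|)·(−1)^{k−|S|}·((A_S)^k)_{ii}, with C(n,m) = 0 when m < 0 or m > n. -/

import Mathlib

open scoped Classical

/-- Binomial coefficient with integer arguments, zero outside `0 ≤ k ≤ n`. -/
def Ibinom (n k : ℤ) : ℤ := if 0 ≤ k ∧ k ≤ n then (n.toNat).choose k.toNat else 0

/-- Restriction of a matrix to a subset of indices (zero outside `S × S`). -/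
def restrict {N : ℕ} (M : Matrix (Fin N) (Fin N) ℤ) (S : Finset (Fin N)) :
    Matrix (Fin N) (Fin N) ℤ :=
  fun i j => if i ∈ S ∧ j ∈ S then M i j else 0

/-!
Expanding `(A_S ^ k) i i` as a sum over walks shows that it counts the closed walks of length `k`
at `i` all of whose vertices lie in `S`. Exchanging the two sums, a closed walk whose vertex set
is `T` contributes `∑_{S ⊇ T} C(N - |S|, k - |S|) (-1)^(k - |S|)`. Writing `S = T ∪ U` and using
`C(n, j) C(n - j, m - j) = C(n, m) C(m, j)`, this becomes `C(n, m) (1 - 1)^m` with `n = N - |T|`,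
`m = k - |T|`, i.e. it is `1` if `|T| = k` and `0` otherwise. Finally a closed walk of length `k`
visits `k` distinct vertices exactly when it is a simple cycle.
-/

open scoped Finset

theorem Matrix.pow_apply_eq_sum_walks {n R : Type*} [Fintype n] [DecidableEq n] [CommSemiring R]
    (M : Matrix n n R) (k : ℕ) (a b : n) :
    (M ^ k) a b = ∑ w : Fin (k + 1) → n with w 0 = a ∧ w (Fin.last k) = b,
      ∏ m : Fin k, M (w m.castSucc) (w m.succ) := by
  induction k generalizing a with
  | zero =>
    rw [pow_zero, one_apply, Finset.sum_filter, ← (Equiv.funUnique (Fin 1) n).symm.sum_comp]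
    simp [ite_and]
  | succ k ih =>
    rw [pow_succ', mul_apply, Finset.sum_filter, ← (Fin.consEquiv fun _ => n).sum_comp,
      Fintype.sum_prod_type]
    simp_rw [ih, Finset.mul_sum, Finset.sum_filter]
    rw [Finset.sum_comm]
    simp [Fin.prod_univ_succ, ← Fin.succ_last, ite_and]

section Binomial

open Finset

lemma Ibinom_natCast (n k : ℕ) : Ibinom n k = n.choose k := by
  unfold Ibinom
  split_ifs with h
  · simp
  · rw [Nat.choose_eq_zero_of_lt (by omega), Nat.cast_zero]

lemma Ibinom_of_neg {n k : ℤ} (hk : k < 0) : Ibinom n k = 0 :=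
  if_neg fun h => hk.not_ge h.1

lemma sum_range_choose_mul_neg_one_pow (m : ℕ) :
    ∑ j ∈ range (m + 1), (m.choose j : ℤ) * (-1) ^ (m - j) = if m = 0 then 1 else 0 := by
  have h := add_pow (1 : ℤ) (-1) m
  rw [add_neg_cancel, zero_pow_eq] at h
  simp only [one_pow, one_mul, mul_comm] at h
  simpa [eq_comm] using h

lemma choose_mul_Ibinom_sub (n m j : ℕ) (hj : j ≤ n) :
    (n.choose j : ℤ) * (Ibinom ((n : ℤ) - j) ((m : ℤ) - j) * (-1) ^ ((m : ℤ) - j).toNat)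
      = n.choose m * (m.choose j * (-1) ^ (m - j)) := by
  rcases le_or_gt j m with hjm | hmj
  · rw [← Nat.cast_sub hj, ← Nat.cast_sub hjm, Ibinom_natCast, Int.toNat_natCast, ← mul_assoc,
      ← mul_assoc, ← Nat.cast_mul, ← Nat.cast_mul, Nat.choose_mul hjm]
  · rw [Ibinom_of_neg (by omega), Nat.choose_eq_zero_of_lt hmj]
    simp

variable {α : Type*} [Fintype α] [DecidableEq α]

lemma sum_Icc_univ_eq_sum_range_choose {M : Type*} [AddCommMonoid M] (T : Finset α)
    (f : ℕ → M) :
    ∑ S ∈ Icc T univ, f #S = ∑ j ∈ range (#Tᶜ + 1), (#Tᶜ).choose j • f (#T + j) := by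
  have hdisj : ∀ U ∈ Tᶜ.powerset, Disjoint T U := fun U hU =>
    disjoint_left.2 fun x hxT hxU => mem_compl.1 (mem_powerset.1 hU hxU) hxT
  rw [Icc_eq_image_powerset (subset_univ T), ← compl_eq_univ_sdiff, sum_image,
    ← sum_powerset_apply_card]
  · exact sum_congr rfl fun U hU => by rw [card_union_of_disjoint (hdisj U hU)]
  · intro U hU V hV hUV
    rw [← union_sdiff_cancel_left (hdisj U hU), ← union_sdiff_cancel_left (hdisj V hV)]
    exact congrArg (· \ T) hUV

lemma sum_Icc_univ_Ibinom_mul_neg_one_pow (T : Finset α) (k : ℕ) :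
    ∑ S ∈ Icc T univ, Ibinom ((Fintype.card α : ℤ) - #S) ((k : ℤ) - #S) *
      (-1) ^ ((k : ℤ) - #S).toNat = if #T = k then 1 else 0 := by
  rw [sum_Icc_univ_eq_sum_range_choose T
    (fun s => Ibinom ((Fintype.card α : ℤ) - s) ((k : ℤ) - s) * (-1) ^ ((k : ℤ) - s).toNat),
    ← card_add_card_compl T]
  set n := #Tᶜ
  rcases lt_or_ge k #T with hlt | hle
  · rw [if_neg hlt.ne']
    refine sum_eq_zero fun j _ => ?_
    rw [Ibinom_of_neg (by omega), zero_mul, smul_zero]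
  obtain ⟨m, rfl⟩ := Nat.exists_eq_add_of_le hle
  simp only [Nat.cast_add, add_sub_add_left_eq_sub, nsmul_eq_mul]
  rw [sum_congr rfl fun j hj => choose_mul_Ibinom_sub n m j (Nat.lt_succ_iff.1 (mem_range.1 hj)),
    ← mul_sum]
  rcases le_or_gt m n with hmn | hnm
  · rw [← sum_subset (range_subset_range.2 (by omega : m + 1 ≤ n + 1)),
      sum_range_choose_mul_neg_one_pow]
    · by_cases hm : m = 0
      · simp [hm]
      · rw [if_neg hm, if_neg (by omega), mul_zero]
    · intro j _ hj
      rw [Nat.choose_eq_zero_of_lt (by simpa using hj), Nat.cast_zero, zero_mul]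
  · rw [Nat.choose_eq_zero_of_lt hnm, if_neg (by omega), Nat.cast_zero, zero_mul]

end Binomial

section Walks

open Finset

variable {α : Type*} [DecidableEq α]

def walkSupport {k : ℕ} (w : Fin (k + 1) → α) : Finset α := univ.image (w ∘ Fin.castSucc)

lemma card_walkSupport_eq_iff {k : ℕ} (w : Fin (k + 1) → α) :
    #(walkSupport w) = k ↔ Function.Injective (w ∘ Fin.castSucc) := by
  simpa [walkSupport, Set.injOn_univ] using card_image_iff (s := univ) (f := w ∘ Fin.castSucc)

lemma walkSupport_nonempty {k : ℕ} (hk : 1 ≤ k) (w : Fin (k + 1) → α) :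
    (walkSupport w).Nonempty :=
  (univ_nonempty_iff.2 ⟨(⟨0, hk⟩ : Fin k)⟩).image (w ∘ Fin.castSucc)

lemma succ_mem_walkSupport {k : ℕ} {w : Fin (k + 1) → α} (hw : w (Fin.last k) = w 0)
    (m : Fin k) : w m.succ ∈ walkSupport w := by
  rcases Fin.eq_castSucc_or_eq_last m.succ with ⟨j, hj⟩ | hj
  · rw [hj]
    exact mem_image_of_mem _ (mem_univ j)
  · rw [hj, hw]
    exact mem_image_of_mem _ (mem_univ (⟨0, m.pos⟩ : Fin k))

noncomputable def closedWalks [Fintype α] (E : α → α → Prop) (i : α) (k : ℕ) :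
    Finset (Fin (k + 1) → α) :=
  {w | w 0 = i ∧ w (Fin.last k) = i ∧ ∀ m : Fin k, E (w m.castSucc) (w m.succ)}

end Walks

lemma restrict_pow_apply_self {N : ℕ} (E : Fin N → Fin N → Prop) (A : Matrix (Fin N) (Fin N) ℤ)
    (hA : ∀ i j, A i j = if E i j then 1 else 0) (S : Finset (Fin N)) (k : ℕ) (i : Fin N) :
    (restrict A S ^ k) i i = #{w ∈ closedWalks E i k | walkSupport w ⊆ S} := by
  have hentry : ∀ x y, restrict A S x y = if (x ∈ S ∧ y ∈ S) ∧ E x y then 1 else 0 := by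
    intro x y
    simp only [restrict, hA, ite_and]
  simp only [Matrix.pow_apply_eq_sum_walks, hentry, Fintype.prod_boole]
  rw [closedWalks, Finset.filter_filter, Finset.natCast_card_filter, Finset.sum_filter]
  refine Finset.sum_congr rfl fun w _ => ?_
  simp only [← ite_and]
  congr 1
  apply propext
  constructor
  · rintro ⟨⟨h0, hl⟩, h⟩
    exact ⟨⟨h0, hl, fun m => (h m).2⟩, Finset.image_subset_iff.2 fun m _ => (h m).1.1⟩
  · rintro ⟨⟨h0, hl, hE⟩, hS⟩
    refine ⟨⟨h0, hl⟩, fun m => ⟨⟨hS (Finset.mem_image_of_mem _ (Finset.mem_univ m)), ?_⟩, hE m⟩⟩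
    exact hS (succ_mem_walkSupport (hl.trans h0.symm) m)

theorem stmt6 (N : ℕ) (E : Fin N → Fin N → Prop)
    (A : Matrix (Fin N) (Fin N) ℤ) (hA : ∀ i j, A i j = if E i j then 1 else 0)
    (k : ℕ) (hk : 1 ≤ k) (i : Fin N) :
    (Nat.card {w : Fin (k + 1) → Fin N //
        w 0 = i ∧ w (Fin.last k) = i ∧ (∀ m : Fin k, E (w m.castSucc) (w m.succ)) ∧
        ∀ a b : Fin k, w a.castSucc = w b.castSucc → a = b} : ℤ)
      = ∑ S ∈ Finset.univ.powerset.filter (fun S : Finset (Fin N) => S.Nonempty),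
          Ibinom ((N : ℤ) - S.card) ((k : ℤ) - S.card) *
            (-1) ^ ((k : ℤ) - S.card).toNat * (restrict A S ^ k) i i := by
  have hcycles : Nat.card {w : Fin (k + 1) → Fin N //
        w 0 = i ∧ w (Fin.last k) = i ∧ (∀ m : Fin k, E (w m.castSucc) (w m.succ)) ∧
        ∀ a b : Fin k, w a.castSucc = w b.castSucc → a = b}
      = #{w ∈ closedWalks E i k | #(walkSupport w) = k} := by
    rw [Nat.card_eq_fintype_card, Fintype.card_subtype, closedWalks, Finset.filter_filter]
    refine congrArg Finset.card (Finset.filter_congr fun w _ => ?_)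
    simp only [card_walkSupport_eq_iff, and_assoc]
    rfl
  rw [hcycles, Finset.natCast_card_filter]
  simp only [restrict_pow_apply_self E A hA, ← sum_Icc_univ_Ibinom_mul_neg_one_pow,
    Fintype.card_fin]
  rw [Finset.sum_comm' (t' := Finset.univ.powerset.filter (fun S => S.Nonempty))
    (s' := fun S => {w ∈ closedWalks E i k | walkSupport w ⊆ S})]
  · refine Finset.sum_congr rfl fun S _ => ?_
    rw [Finset.sum_const, nsmul_eq_mul, mul_comm]
  · intro w S
    simp only [Finset.mem_Icc, Finset.mem_filter, Finset.mem_powerset, Finset.subset_univ,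
      and_true, true_and]
    exact ⟨fun h => ⟨h, (walkSupport_nonempty hk w).mono h.2⟩, And.left⟩
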